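/- arXiv:1707.08368 — 2 statements merged into one kernel-verified Lean document; each statement's English description precedes it below -/
import Mathlib

section
/- Suppose W : ℝ^{d×d} → ℝ is quasiconvex, of class C¹, and satisfies |W(ξ)| ≤ c(1+|ξ|^p) for some p ≥ 2. Then there exists a constant c' > 0 such that for every ξ ∈ ℝ^{d×d}: |DW(ξ)| ≤ c'(1 + |ξ|^{p-1}). -/
open MeasureTheory Filter Set
open scoped RealInnerProductSpace ENNReal Topology NNReal

noncomputable section

/-- `ℝ^d`. -/
abbrev Vec (d : ℕ) := EuclideanSpace ℝ (Fin d)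
/-- `ℝ^{d×d}`, with the Euclidean (Frobenius) norm. -/
abbrev Mat (d : ℕ) := EuclideanSpace ℝ (Fin d × Fin d)

/-- The open unit cube `Q = (0,1)^d`. -/
def Qcube (d : ℕ) : Set (Vec d) := {x | ∀ i, x i ∈ Ioo (0:ℝ) 1}

/-- The translated and scaled cube `Q(x₀,r) = x₀ + r Q`. -/
def QcubeAt {d : ℕ} (x₀ : Vec d) (r : ℝ) : Set (Vec d) := {x | ∀ i, x i - x₀ i ∈ Ioo (0:ℝ) r}

/-- `Q`-periodicity of a function defined on `ℝ^d` (period 1 in each coordinate direction). -/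
def QPeriodic {d : ℕ} {α : Type*} (f : Vec d → α) : Prop :=
  ∀ (x : Vec d) (i : Fin d), f (x + EuclideanSpace.single i 1) = f x

/-- Spatial gradient of a vector field `y : ℝ^d → ℝ^d`, as the `d×d` matrix
`(grad y x) (i, α) = ∂_α y_i (x)`. -/
def grad {d : ℕ} (y : Vec d → Vec d) (x : Vec d) : Mat d :=
  (EuclideanSpace.equiv (Fin d × Fin d) ℝ).symm
    (fun q => fderiv ℝ y x (EuclideanSpace.single q.2 1) q.1)

/-- Divergence of a matrix field: `(divMat Φ x) i = ∑_α ∂_α Φ_{iα}(x)`. -/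
def divMat {d : ℕ} (Φ : Vec d → Mat d) (x : Vec d) : Vec d :=
  (EuclideanSpace.equiv (Fin d) ℝ).symm
    (fun i => ∑ α, fderiv ℝ (fun z => Φ z (i, α)) x (EuclideanSpace.single α 1))

/-- `|V(ξ)|² = |ξ|² + |ξ|^p`, where `V(ξ) = (|ξ|²+|ξ|^p)^{1/2}` is the auxiliary function. -/
def V2 (p : ℝ) {E : Type*} [Norm E] (ξ : E) : ℝ := ‖ξ‖ ^ 2 + ‖ξ‖ ^ p

/-- A function is Lipschitz (i.e. belongs to `W^{1,∞}`). -/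
def IsLip {α β : Type*} [PseudoMetricSpace α] [PseudoMetricSpace β] (f : α → β) : Prop :=
  ∃ K : ℝ≥0, LipschitzWith K f

/-- `W` is strongly quasiconvex with constant `c₀`:
`∫_Q [W(ξ+∇φ) − W(ξ)] ≥ c₀ ∫_Q |V(∇φ)|²` for all `ξ` and all `Q`-periodic Lipschitz `φ`. -/
def StronglyQuasiconvex {d : ℕ} (p c₀ : ℝ) (W : Mat d → ℝ) : Prop :=
  ∀ (ξ : Mat d) (φ : Vec d → Vec d), IsLip φ → QPeriodic φ →
    c₀ * ∫ x in Qcube d, V2 p (grad φ x) ≤ ∫ x in Qcube d, (W (ξ + grad φ x) - W ξ)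

/-- `W` is quasiconvex. -/
def QuasiconvexW {d : ℕ} (W : Mat d → ℝ) : Prop :=
  ∀ (ξ : Mat d) (φ : Vec d → Vec d), IsLip φ → QPeriodic φ →
    0 ≤ ∫ x in Qcube d, (W (ξ + grad φ x) - W ξ)

/-- The product measure `dt ⊗ dx` on `Q_T = (0,T) × Q`. -/
def μQT (d : ℕ) (T : ℝ) : Measure (ℝ × Vec d) :=
  (volume.restrict (Ioo (0:ℝ) T)).prod (volume.restrict (Qcube d))

/-- A continuous function with growth strictly slower than `|ξ|^q` at infinity,
i.e. an element of `C_q`. -/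
def GrowthNull (q : ℝ) {E : Type*} [NormedAddCommGroup E] (g : E → ℝ) : Prop :=
  Continuous g ∧ ∀ ε > 0, ∃ R, ∀ ξ : E, R ≤ ‖ξ‖ → |g ξ| ≤ ε * ‖ξ‖ ^ q

/-- Weak convergence in `L¹(μ)`: testing against bounded measurable functions. -/
def WeakL1Lim {Z : Type*} [MeasurableSpace Z] (μ : Measure Z)
    (f : ℕ → Z → ℝ) (F : Z → ℝ) : Prop :=
  ∀ h : Z → ℝ, Measurable h → (∃ C, ∀ z, |h z| ≤ C) →
    Tendsto (fun n => ∫ z, h z * f n z ∂μ) atTop (𝓝 (∫ z, h z * F z ∂μ))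

/-- The sequence `Y n` generates the (q-)Young measure `ν` over the measure space `(Z, μ)`:
`g(Y_n) ⇀ ⟨ν, g⟩` weakly in `L¹` for every continuous `g` with `g(ξ)/|ξ|^q → 0`. -/
def GeneratesYM {Z E : Type*} [MeasurableSpace Z] [NormedAddCommGroup E] [MeasurableSpace E]
    (μ : Measure Z) (q : ℝ) (Y : ℕ → Z → E) (ν : Z → Measure E) : Prop :=
  ∀ g : E → ℝ, GrowthNull q g →
    WeakL1Lim μ (fun n z => g (Y n z)) (fun z => ∫ ξ, g ξ ∂ν z)

/-- Growth condition for functions on the `(λ,ξ)` phase space: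
`g(λ,ξ)/(|λ|²+|ξ|^p) → 0` at infinity. -/
def PairGrowthNull {d : ℕ} (p : ℝ) (g : Vec d × Mat d → ℝ) : Prop :=
  Continuous g ∧ ∀ ε > 0, ∃ R, ∀ w : Vec d × Mat d, R ≤ ‖w‖ →
    |g w| ≤ ε * (‖w.1‖ ^ 2 + ‖w.2‖ ^ p)

/-- Smooth test functions `φ ∈ C^∞_c([0,T); C^∞(Q))`: smooth, `Q`-periodic in space and
vanishing for `t` near `T`. -/
def IsTestFn {d : ℕ} (T : ℝ) {E : Type*} [NormedAddCommGroup E] [NormedSpace ℝ E]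
    (φ : ℝ → Vec d → E) : Prop :=
  ContDiff ℝ (⊤ : ℕ∞) (fun z : ℝ × Vec d => φ z.1 z.2) ∧ (∀ t, QPeriodic (φ t)) ∧
    ∃ T' , T' < T ∧ ∀ t ≥ T', ∀ x, φ t x = 0

/-- Test functions compactly supported in time inside `(0,T)`. -/
def IsTestFn₀ {d : ℕ} (T : ℝ) {E : Type*} [NormedAddCommGroup E] [NormedSpace ℝ E]
    (φ : ℝ → Vec d → E) : Prop :=
  ContDiff ℝ (⊤ : ℕ∞) (fun z : ℝ × Vec d => φ z.1 z.2) ∧ (∀ t, QPeriodic (φ t)) ∧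
    ∃ a b, 0 < a ∧ a ≤ b ∧ b < T ∧ ∀ t, t ∉ Icc a b → ∀ x, φ t x = 0

/-- The entropy `η(λ,ξ) = ½|λ|² + W(ξ)`. -/
def entropy {d : ℕ} (W : Mat d → ℝ) (w : Vec d × Mat d) : ℝ := 1/2 * ‖w.1‖ ^ 2 + W w.2

def Zset : Set ℝ := Set.range (Int.cast : ℤ → ℝ)

lemma Zset_nonempty : Zset.Nonempty := ⟨0, ⟨0, by simp⟩⟩

lemma le_infDist' {x b : ℝ} {s : Set ℝ} (hs : s.Nonempty) (h : ∀ y ∈ s, b ≤ dist x y) :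
    b ≤ Metric.infDist x s :=
  le_of_not_gt fun hlt => by
    obtain ⟨y, hy, hd⟩ := (Metric.infDist_lt_iff hs).1 hlt
    exact absurd (h y hy) (by linarith)

def saw (s : ℝ) : ℝ := Metric.infDist s Zset

lemma saw_lip : LipschitzWith 1 saw := Metric.lipschitz_infDist_pt _

lemma saw_add_one (s : ℝ) : saw (s + 1) = saw s := by
  have himg : (fun x : ℝ => x + 1) '' Zset = Zset := by
    ext x
    constructor
    · rintro ⟨y, ⟨m, rfl⟩, rfl⟩
      exact ⟨m + 1, by push_cast; ring⟩
    · rintro ⟨m, rfl⟩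
      exact ⟨(m : ℝ) - 1, ⟨m - 1, by push_cast; ring⟩, by ring⟩
  have hiso : Isometry (fun x : ℝ => x + 1) :=
    Isometry.of_dist_eq (by intro a b; simp [Real.dist_eq])
  calc saw (s + 1) = Metric.infDist ((fun x : ℝ => x + 1) s) ((fun x : ℝ => x + 1) '' Zset) := by
        rw [himg]; rfl
    _ = Metric.infDist s Zset := Metric.infDist_image hiso
    _ = saw s := rfl

lemma saw_eq_left {s : ℝ} (h0 : 0 ≤ s) (h2 : s ≤ 1/2) : saw s = s := by
  refine le_antisymm ?_ ?_
  · have := Metric.infDist_le_dist_of_mem (x := s) (show (0:ℝ) ∈ Zset from ⟨0, by simp⟩)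
    simpa [saw, Real.dist_eq, abs_of_nonneg h0] using this
  · refine le_infDist' Zset_nonempty ?_
    rintro y ⟨m, rfl⟩
    rw [Real.dist_eq]
    rcases le_or_gt (m : ℝ) 0 with hm | hm
    · calc s ≤ s - m := by linarith
        _ ≤ |s - m| := le_abs_self _
    · have hm1 : (1 : ℝ) ≤ m := by exact_mod_cast Int.cast_pos.mp hm
      calc s ≤ (m : ℝ) - s := by linarith
        _ ≤ |s - m| := by rw [abs_sub_comm]; exact le_abs_self _

lemma saw_eq_right {s : ℝ} (h0 : 1/2 ≤ s) (h2 : s ≤ 1) : saw s = 1 - s := by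
  refine le_antisymm ?_ ?_
  · have := Metric.infDist_le_dist_of_mem (x := s) (show (1:ℝ) ∈ Zset from ⟨1, by simp⟩)
    simpa [saw, Real.dist_eq, abs_of_nonpos (by linarith : s - 1 ≤ 0)] using this
  · refine le_infDist' Zset_nonempty ?_
    rintro y ⟨m, rfl⟩
    rw [Real.dist_eq]
    rcases le_or_gt (m : ℝ) 0 with hm | hm
    · calc (1:ℝ) - s ≤ s - m := by linarith
        _ ≤ |s - m| := le_abs_self _
    · have hm1 : (1 : ℝ) ≤ m := by exact_mod_cast Int.cast_pos.mp hm
      calc (1:ℝ) - s ≤ (m : ℝ) - s := by linarith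
        _ ≤ |s - m| := by rw [abs_sub_comm]; exact le_abs_self _


lemma mul_deriv_le_of_midpoint {f : ℝ → ℝ} {D : ℝ}
    (hm : ∀ s h : ℝ, 2 * f s ≤ f (s + h) + f (s - h))
    (hd : HasDerivAt f D 0) {R : ℝ} (hR : 0 < R) : D * R ≤ f R - f 0 := by
  -- step increments are monotone
  have key : ∀ n : ℕ, 1 ≤ n → (n : ℝ) * (f (R / n) - f 0) ≤ f R - f 0 := by
    intro n hn
    set h : ℝ := R / n with hh
    have hmono : ∀ k : ℕ, f h - f 0 ≤ f ((k + 1 : ℕ) * h) - f ((k : ℕ) * h) := by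
      intro k
      induction k with
      | zero => simp
      | succ m ih =>
        have step := hm ((m + 1 : ℕ) * h) h
        have e1 : ((m + 1 : ℕ) : ℝ) * h + h = ((m + 1 + 1 : ℕ) : ℝ) * h := by push_cast; ring
        have e2 : ((m + 1 : ℕ) : ℝ) * h - h = ((m : ℕ) : ℝ) * h := by push_cast; ring
        rw [e1, e2] at step
        calc f h - f 0 ≤ f ((m + 1 : ℕ) * h) - f ((m : ℕ) * h) := ih
          _ ≤ f ((m + 1 + 1 : ℕ) * h) - f ((m + 1 : ℕ) * h) := by linarith
    have htel : ∑ k ∈ Finset.range n, (f ((k + 1 : ℕ) * h) - f ((k : ℕ) * h))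
        = f ((n : ℕ) * h) - f ((0 : ℕ) * h) :=
      Finset.sum_range_sub (fun k => f ((k : ℕ) * h)) n
    have hsum : (n : ℝ) * (f h - f 0) ≤ ∑ k ∈ Finset.range n, (f ((k + 1 : ℕ) * h) - f ((k : ℕ) * h)) := by
      have := Finset.card_nsmul_le_sum (Finset.range n)
        (fun k => f ((k + 1 : ℕ) * h) - f ((k : ℕ) * h)) (f h - f 0) (fun k _ => hmono k)
      simpa [nsmul_eq_mul] using this
    have hn0 : (n : ℝ) ≠ 0 := by positivity
    have hnh : (n : ℝ) * h = R := by rw [hh]; field_simp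
    rw [htel, hnh] at hsum
    simpa using hsum
  -- take the limit n → ∞
  have hslope : Tendsto (fun n : ℕ => slope f 0 (R / n)) atTop (𝓝 D) := by
    have h1 : Tendsto (fun n : ℕ => R / n) atTop (𝓝[≠] (0:ℝ)) := by
      refine tendsto_nhdsWithin_of_tendsto_nhds_of_eventually_within _
        (tendsto_const_div_atTop_nhds_zero_nat R) ?_
      filter_upwards [eventually_ge_atTop 1] with n hn
      have : (0:ℝ) < n := by exact_mod_cast Nat.lt_of_lt_of_le Nat.zero_lt_one hn
      exact div_ne_zero hR.ne' this.ne'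
    exact (hasDerivAt_iff_tendsto_slope.1 hd).comp h1
  have hlim : Tendsto (fun n : ℕ => R * slope f 0 (R / n)) atTop (𝓝 (R * D)) :=
    hslope.const_mul R
  have hev : ∀ᶠ n : ℕ in atTop, R * slope f 0 (R / n) ≤ f R - f 0 := by
    filter_upwards [eventually_ge_atTop 1] with n hn
    have hnpos : (0:ℝ) < n := by exact_mod_cast Nat.lt_of_lt_of_le Nat.zero_lt_one hn
    have : R * slope f 0 (R / n) = (n : ℝ) * (f (R / n) - f 0) := by
      have hR0 : R ≠ 0 := hR.ne'
      rw [slope_def_field]; field_simp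
      rw [mul_zero, sub_zero, mul_div_cancel_left₀ _ hR0]
    rw [this]
    exact key n hn
  have := le_of_tendsto hlim hev
  linarith [this]


-- volume of coordinate boxes in Vec d
lemma volume_pi_set (d : ℕ) (t : Fin d → Set ℝ) (ht : ∀ i, MeasurableSet (t i)) :
    volume {x : Vec d | ∀ i, x i ∈ t i} = ∏ i, volume (t i) := by
  have hmp := EuclideanSpace.volume_preserving_symm_measurableEquiv_toLp (ι := Fin d)
  have hset : {x : Vec d | ∀ i, x i ∈ t i}
      = (MeasurableEquiv.toLp 2 (Fin d → ℝ)).symm ⁻¹' (Set.pi univ t) := by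
    ext x
    simp only [mem_preimage, Set.mem_pi, mem_univ, forall_true_left, mem_setOf_eq]
    rfl
  rw [hset, hmp.measure_preimage
    (MeasurableSet.pi countable_univ (fun i _ => ht i)).nullMeasurableSet]
  exact volume_pi_pi t

lemma volume_Qcube (d : ℕ) : volume (Qcube d) = 1 := by
  rw [show Qcube d = {x : Vec d | ∀ i, x i ∈ Ioo (0:ℝ) 1} from rfl,
    volume_pi_set d _ (fun _ => measurableSet_Ioo)]
  simp [Real.volume_Ioo]

instance (d : ℕ) : IsFiniteMeasure (volume.restrict (Qcube d)) := by
  constructor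
  rw [Measure.restrict_apply_univ, volume_Qcube]
  exact ENNReal.one_lt_top


lemma single_add' {ι : Type*} [DecidableEq ι] [Fintype ι] (q : ι) (u v : ℝ) :
    EuclideanSpace.single q (u + v) = EuclideanSpace.single q u + EuclideanSpace.single q v := by
  ext j
  simp only [EuclideanSpace.single_apply, PiLp.add_apply]
  split <;> simp

lemma single_neg' {ι : Type*} [DecidableEq ι] [Fintype ι] (q : ι) (u : ℝ) :
    EuclideanSpace.single q (-u) = -EuclideanSpace.single q u := by
  ext j
  simp only [EuclideanSpace.single_apply, PiLp.neg_apply]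
  split <;> simp

lemma qc_midpoint {d : ℕ} {W : Mat d → ℝ} (hQC : QuasiconvexW W)
    (ξ : Mat d) (q : Fin d × Fin d) (s : ℝ) :
    2 * W ξ ≤ W (ξ + EuclideanSpace.single q s) + W (ξ - EuclideanSpace.single q s) := by
  obtain ⟨i, α⟩ := q
  set v : Vec d := EuclideanSpace.single i (1:ℝ) with hv
  set w : Vec d := s • v with hw
  set φ : Vec d → Vec d := fun x => saw (x α) • w with hφ
  set E : Mat d := EuclideanSpace.single (i, α) s with hE
  have hlip : IsLip φ :=
    ⟨_, ((ContinuousLinearMap.toSpanSingleton ℝ w).lipschitz.comp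
      (saw_lip.comp (EuclideanSpace.proj α : Vec d →L[ℝ] ℝ).lipschitz))⟩
  have hper : QPeriodic φ := by
    intro x α'
    have hadd : (x + EuclideanSpace.single α' (1:ℝ)) α
        = x α + (EuclideanSpace.single α' (1:ℝ)) α := rfl
    show saw ((x + EuclideanSpace.single α' (1:ℝ)) α) • w = saw (x α) • w
    rw [hadd, EuclideanSpace.single_apply]
    by_cases h : α = α'
    · rw [if_pos h, saw_add_one]
    · rw [if_neg h, add_zero]
  set L : Vec d →L[ℝ] Vec d := (EuclideanSpace.proj α).smulRight w with hL
  have hLapp : ∀ z : Vec d, L z = (z α) • w := fun z => rfl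
  have hgrad_val : ∀ x : Vec d, fderiv ℝ φ x = L → grad φ x = E := by
    intro x hfd
    ext q'
    show fderiv ℝ φ x (EuclideanSpace.single q'.2 1) q'.1 = E q'
    rw [hfd]
    obtain ⟨i', α'⟩ := q'
    show (((EuclideanSpace.single α' (1:ℝ)) α) • w) i' = E (i', α')
    rw [hE, hw, hv]
    simp only [PiLp.smul_apply, smul_eq_mul, EuclideanSpace.single_apply, Prod.mk.injEq]
    by_cases h1 : α = α' <;> by_cases h2 : i' = i <;>
      simp [h1, h2, Prod.ext_iff, eq_comm] <;> ring_nf <;> simp [h1, h2, eq_comm]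
  have hgrad_valn : ∀ x : Vec d, fderiv ℝ φ x = -L → grad φ x = -E := by
    intro x hfd
    ext q'
    show fderiv ℝ φ x (EuclideanSpace.single q'.2 1) q'.1 = (-E) q'
    rw [hfd]
    obtain ⟨i', α'⟩ := q'
    show (-(((EuclideanSpace.single α' (1:ℝ)) α) • w)) i' = (-E) (i', α')
    rw [hE, hw, hv]
    simp only [PiLp.neg_apply, PiLp.smul_apply, smul_eq_mul, EuclideanSpace.single_apply,
      Prod.mk.injEq]
    by_cases h1 : α = α' <;> by_cases h2 : i' = i <;>
      simp [h1, h2, Prod.ext_iff, eq_comm] <;> ring_nf <;> simp [h1, h2, eq_comm]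
  have hcontα : Continuous fun z : Vec d => z α := (EuclideanSpace.proj α).continuous
  have hgradp : ∀ x : Vec d, 0 < x α → x α < 1/2 → grad φ x = E := by
    intro x h1 h2
    apply hgrad_val
    have hopen : IsOpen {z : Vec d | 0 < z α ∧ z α < 1/2} :=
      (isOpen_lt continuous_const hcontα).inter (isOpen_lt hcontα continuous_const)
    have hev : φ =ᶠ[𝓝 x] ⇑L := by
      refine Filter.eventuallyEq_of_mem (hopen.mem_nhds ⟨h1, h2⟩) ?_
      intro z hz
      show saw (z α) • w = L z
      rw [hLapp, saw_eq_left hz.1.le hz.2.le]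
    exact (L.hasFDerivAt.congr_of_eventuallyEq hev).fderiv
  have hgradm : ∀ x : Vec d, 1/2 < x α → x α < 1 → grad φ x = -E := by
    intro x h1 h2
    apply hgrad_valn
    have hopen : IsOpen {z : Vec d | 1/2 < z α ∧ z α < 1} :=
      (isOpen_lt continuous_const hcontα).inter (isOpen_lt hcontα continuous_const)
    have hev : φ =ᶠ[𝓝 x] fun z => w - L z := by
      refine Filter.eventuallyEq_of_mem (hopen.mem_nhds ⟨h1, h2⟩) ?_
      intro z hz
      show saw (z α) • w = w - L z
      rw [hLapp, saw_eq_right hz.1.le hz.2.le, sub_smul, one_smul]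
    have hd : HasFDerivAt (fun z => w - L z) (-L) x := L.hasFDerivAt.const_sub w
    exact (hd.congr_of_eventuallyEq hev).fderiv
  set a : ℝ := W (ξ + E) - W ξ with ha
  set b : ℝ := W (ξ - E) - W ξ with hb
  set g : Vec d → ℝ :=
    fun x => Set.indicator {y : Vec d | y α < 1/2} (fun _ => a - b) x + b with hg
  have hmeasH : MeasurableSet {y : Vec d | y α < 1/2} :=
    measurableSet_lt hcontα.measurable measurable_const
  have hmeasQ : MeasurableSet (Qcube d) := by
    have : Qcube d = ⋂ j, ((fun x : Vec d => x j) ⁻¹' Ioo 0 1) := by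
      ext x; simp [Qcube]
    rw [this]
    exact (isOpen_iInter_of_finite fun j =>
      isOpen_Ioo.preimage (EuclideanSpace.proj j).continuous).measurableSet
  have hNnull : volume {x : Vec d | x α = (1:ℝ)/2} = 0 := by
    have hs : {x : Vec d | x α = (1:ℝ)/2}
        = {x : Vec d | ∀ j, x j ∈ (if j = α then ({(1:ℝ)/2} : Set ℝ) else univ)} := by
      ext x
      constructor
      · intro hx j
        by_cases h : j = α
        · subst h; simp only [if_pos rfl, mem_singleton_iff]; exact hx
        · simp [h]
      · intro hx
        have := hx α
        simpa using this
    have hmt : ∀ j : Fin d, MeasurableSet (if j = α then ({(1:ℝ)/2} : Set ℝ) else univ) := by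
      intro j
      split
      · exact measurableSet_singleton _
      · exact MeasurableSet.univ
    rw [hs, volume_pi_set _ _ hmt]
    refine Finset.prod_eq_zero (Finset.mem_univ α) ?_
    simp
  have hae : ∀ᵐ x ∂volume, x ∈ Qcube d → (W (ξ + grad φ x) - W ξ) = g x := by
    have hN : ∀ᵐ x : Vec d ∂volume, x α ≠ 1/2 := by
      rw [ae_iff]
      simpa using hNnull
    filter_upwards [hN] with x hx hxQ
    have hxα := hxQ α
    rcases lt_trichotomy (x α) (1/2) with hlt | heq | hgt
    · rw [hgradp x hxα.1 hlt, hg]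
      simp only [Set.indicator_of_mem (show x ∈ {y : Vec d | y α < 1/2} from hlt)]
      ring
    · exact absurd heq hx
    · rw [hgradm x hgt hxα.2, hg]
      simp only [Set.indicator_of_notMem
        (show x ∉ {y : Vec d | y α < 1/2} from not_lt.2 hgt.le)]
      rw [← sub_eq_add_neg]
      simp [hb]
  have hint : ∫ x in Qcube d, (W (ξ + grad φ x) - W ξ)
      = (a - b) * (volume ({y : Vec d | y α < 1/2} ∩ Qcube d)).toReal
        + b * (volume (Qcube d)).toReal := by
    rw [setIntegral_congr_ae hmeasQ hae]
    rw [hg, integral_add ((integrable_const (a - b)).indicator hmeasH) (integrable_const b)]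
    rw [integral_indicator_const _ hmeasH, setIntegral_const b, measureReal_restrict_apply hmeasH]
    simp only [smul_eq_mul, measureReal_def]
    ring
  have hvol1 : volume ({y : Vec d | y α < 1/2} ∩ Qcube d) = ENNReal.ofReal (1/2) := by
    have hs : {y : Vec d | y α < 1/2} ∩ Qcube d
        = {x : Vec d | ∀ j, x j ∈ (if j = α then Ioo (0:ℝ) (1/2) else Ioo 0 1)} := by
      ext x
      constructor
      · rintro ⟨h1, h2⟩ j
        by_cases h : j = α
        · subst h; simp only [if_pos rfl]; exact ⟨(h2 j).1, h1⟩
        · simp only [if_neg h]; exact h2 j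
      · intro hx
        have hxa := hx α
        rw [if_pos rfl] at hxa
        refine ⟨hxa.2, fun j => ?_⟩
        have := hx j
        by_cases h : j = α
        · subst h
          rw [if_pos rfl] at this
          exact ⟨this.1, this.2.trans (by norm_num)⟩
        · rwa [if_neg h] at this
    have hmt2 : ∀ j : Fin d, MeasurableSet (if j = α then Ioo (0:ℝ) (1/2) else Ioo 0 1) := by
      intro j
      split <;> exact measurableSet_Ioo
    rw [hs, volume_pi_set _ _ hmt2]
    have : ∀ j : Fin d, volume (if j = α then Ioo (0:ℝ) (1/2) else Ioo 0 1)
        = (if j = α then ENNReal.ofReal (1/2) else 1) := by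
      intro j
      split <;> simp [Real.volume_Ioo] <;> norm_num
    rw [Finset.prod_congr rfl (fun j _ => this j), Finset.prod_ite_eq' Finset.univ α
      (fun _ => ENNReal.ofReal (1/2))]
    simp
  have h0 := hQC ξ φ hlip hper
  rw [hint, hvol1, volume_Qcube] at h0
  have htr : (ENNReal.ofReal ((1:ℝ)/2)).toReal = 1/2 := by
    rw [ENNReal.toReal_ofReal]; norm_num
  rw [htr] at h0
  simp only [ENNReal.toReal_one, mul_one] at h0
  have : 0 ≤ (a + b) / 2 := by linarith
  rw [ha, hb] at this
  linarith


lemma single_smul' {ι : Type*} [DecidableEq ι] [Fintype ι] (q : ι) (u : ℝ) :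
    EuclideanSpace.single q u = u • EuclideanSpace.single q (1:ℝ) := by
  ext j
  simp only [EuclideanSpace.single_apply, PiLp.smul_apply, smul_eq_mul]
  split <;> simp

set_option maxHeartbeats 2000000 in
theorem quasiconvex_derivative_growth'
    {d : ℕ} {p : ℝ} (hp : 2 ≤ p) (W : Mat d → ℝ) (c : ℝ) (hc : 0 < c)
    (hW1 : ContDiff ℝ 1 W)
    (hmid : ∀ (ξ : Mat d) (q : Fin d × Fin d) (s : ℝ),
      2 * W ξ ≤ W (ξ + EuclideanSpace.single q s) + W (ξ - EuclideanSpace.single q s))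
    (hW3 : ∀ ξ : Mat d, |W ξ| ≤ c * (1 + ‖ξ‖ ^ p)) :
    ∃ c' > (0:ℝ), ∀ ξ : Mat d, ‖gradient W ξ‖ ≤ c' * (1 + ‖ξ‖ ^ (p - 1)) := by
  set CB : ℝ := 2*c + 2*c*(2:ℝ)^p*(2:ℝ)^(p-1) with hCB
  have hp0 : (0:ℝ) ≤ p := by linarith
  have hp1 : (0:ℝ) ≤ p - 1 := by linarith
  have hCBpos : 0 < CB := by positivity
  refine ⟨d * CB + 1, by positivity, ?_⟩
  intro ξ
  set r : ℝ := ‖ξ‖ with hr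
  have hr0 : 0 ≤ r := norm_nonneg ξ
  set R : ℝ := 1 + r with hRdef
  have hRpos : (0:ℝ) < R := by positivity
  have hR1 : (1:ℝ) ≤ R := by simp [hRdef]; linarith
  have hu0 : (0:ℝ) ≤ r ^ (p-1) := Real.rpow_nonneg hr0 _
  set B : ℝ := CB * (1 + r ^ (p-1)) with hB
  have hB0 : 0 ≤ B := by positivity
  have hdiff : DifferentiableAt ℝ W ξ := (hW1.differentiable one_ne_zero) ξ
  -- component bound
  have hcomp : ∀ q : Fin d × Fin d, |fderiv ℝ W ξ (EuclideanSpace.single q 1)| ≤ B := by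
    intro q
    set e : Mat d := EuclideanSpace.single q (1:ℝ) with he
    have hne : ‖e‖ = 1 := by simp [he, EuclideanSpace.norm_single]
    set f : ℝ → ℝ := fun u => W (ξ + u • e) with hf
    set D : ℝ := fderiv ℝ W ξ e with hD
    have hm : ∀ s h : ℝ, 2 * f s ≤ f (s + h) + f (s - h) := by
      intro s h
      have := hmid (ξ + EuclideanSpace.single q s) q h
      rw [single_smul' q s, single_smul' q h] at this
      calc 2 * f s = 2 * W (ξ + s • e) := rfl
        _ ≤ W (ξ + s • e + h • e) + W (ξ + s • e - h • e) := this
        _ = f (s + h) + f (s - h) := by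
            have e1 : ξ + s • e + h • e = ξ + (s + h) • e := by module
            have e2 : ξ + s • e - h • e = ξ + (s - h) • e := by module
            rw [hf]
            simp only [e1, e2]
    have hline : HasDerivAt (fun u : ℝ => ξ + u • e) e 0 := by
      simpa using ((hasDerivAt_id (0:ℝ)).smul_const e).const_add ξ
    have hWd : HasFDerivAt W (fderiv ℝ W ξ) ((fun u : ℝ => ξ + u • e) 0) := by
      simpa using hdiff.hasFDerivAt
    have hDf : HasDerivAt f D 0 := by
      simpa [hf, hD, Function.comp_def] using hWd.comp_hasDerivAt 0 hline
    have hDfneg : HasDerivAt (fun u => f (-u)) (-D) 0 := by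
      have h1 : HasDerivAt f D (-(0:ℝ)) := by simpa using hDf
      simpa [Function.comp_def] using h1.comp 0 (hasDerivAt_neg (0:ℝ))
    have hmneg : ∀ s h : ℝ, 2 * (fun u => f (-u)) s
        ≤ (fun u => f (-u)) (s + h) + (fun u => f (-u)) (s - h) := by
      intro s h
      have := hm (-s) (-h)
      have e1 : -s + -h = -(s + h) := by ring
      have e2 : -s - -h = -(s - h) := by ring
      rw [e1, e2] at this
      exact this
    have hb1 := mul_deriv_le_of_midpoint hm hDf hRpos
    have hb2 := mul_deriv_le_of_midpoint hmneg hDfneg hRpos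
    -- growth bounds on f at 0, R, -R
    have hXbd : ∀ u : ℝ, |u| ≤ R → |f u| ≤ c * (1 + (2*R)^p) := by
      intro u hu
      have hnorm : ‖ξ + u • e‖ ≤ 2 * R := by
        calc ‖ξ + u • e‖ ≤ ‖ξ‖ + ‖u • e‖ := norm_add_le _ _
          _ = r + |u| := by rw [norm_smul, hne, Real.norm_eq_abs]; ring
          _ ≤ 2 * R := by simp [hRdef]; linarith
      have := hW3 (ξ + u • e)
      refine this.trans ?_
      have hmono : ‖ξ + u • e‖ ^ p ≤ (2*R) ^ p :=
        Real.rpow_le_rpow (norm_nonneg _) hnorm hp0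
      nlinarith
    have hf0 : |f 0| ≤ c * (1 + (2*R)^p) := by
      have := hXbd 0 (by simp; linarith)
      simpa using this
    have hfR : |f R| ≤ c * (1 + (2*R)^p) := hXbd R (by rw [abs_of_pos hRpos])
    have hfmR : |f (-R)| ≤ c * (1 + (2*R)^p) := hXbd (-R) (by rw [abs_neg, abs_of_pos hRpos])
    -- |D| * R ≤ 2c(1+(2R)^p)
    have habs : |D| * R ≤ 2 * c * (1 + (2*R)^p) := by
      rcases le_or_gt 0 D with hD0 | hD0
      · rw [abs_of_nonneg hD0]
        have h1 : f R - f 0 ≤ |f R| + |f 0| := by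
          have := le_abs_self (f R); have := neg_abs_le (f 0); linarith [le_abs_self (f R), neg_abs_le (f 0)]
        linarith
      · rw [abs_of_neg hD0]
        have h2 : f (-R) - f 0 ≤ |f (-R)| + |f 0| := by
          linarith [le_abs_self (f (-R)), neg_abs_le (f 0)]
        simp only [neg_zero] at hb2
        linarith
    -- conclude component bound
    have h2Rp : (2*R)^p = (2:ℝ)^p * R^p := Real.mul_rpow (by norm_num) hRpos.le
    have hRp1 : R ^ (p-1) ≤ (2:ℝ)^(p-1) * (1 + r^(p-1)) := by
      have hmax : R ≤ 2 * max 1 r := by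
        rcases max_cases 1 r with ⟨h1, h2⟩ | ⟨h1, h2⟩ <;> rw [h1] <;> simp [hRdef] <;> linarith
      have h1 : R ^ (p-1) ≤ (2 * max 1 r) ^ (p-1) :=
        Real.rpow_le_rpow hRpos.le hmax hp1
      have h2 : (2 * max 1 r) ^ (p-1) = (2:ℝ)^(p-1) * (max 1 r)^(p-1) :=
        Real.mul_rpow (by norm_num) (by positivity)
      have h3 : (max 1 r)^(p-1) ≤ 1 + r^(p-1) := by
        rcases max_choice 1 r with h | h <;> rw [h]
        · simp [Real.one_rpow]; linarith
        · linarith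
      calc R ^ (p-1) ≤ (2 * max 1 r) ^ (p-1) := h1
        _ = (2:ℝ)^(p-1) * (max 1 r)^(p-1) := h2
        _ ≤ (2:ℝ)^(p-1) * (1 + r^(p-1)) := by
            have : (0:ℝ) < (2:ℝ)^(p-1) := Real.rpow_pos_of_pos (by norm_num) _
            nlinarith
    have hRpdiv : R ^ p / R = R ^ (p-1) := by
      rw [Real.rpow_sub hRpos, Real.rpow_one]
    have hDdiv : |D| ≤ 2*c*(1 + (2*R)^p) / R := (le_div_iff₀ hRpos).2 habs
    have hsplit : 2*c*(1 + (2*R)^p) / R = 2*c/R + 2*c*(2:ℝ)^p * (R^p / R) := by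
      rw [h2Rp]; ring
    have hc1 : 2*c/R ≤ 2*c := by
      apply div_le_self (by positivity) hR1
    have h2p : (0:ℝ) < (2:ℝ)^p := Real.rpow_pos_of_pos (by norm_num) _
    have step1 : |D| ≤ 2*c/R + 2*c*(2:ℝ)^p * R^(p-1) := by
      rw [← hRpdiv, ← hsplit]; exact hDdiv
    have step2 : 2*c*(2:ℝ)^p * R^(p-1) ≤ 2*c*(2:ℝ)^p * ((2:ℝ)^(p-1) * (1 + r^(p-1))) :=
      mul_le_mul_of_nonneg_left hRp1 (by positivity)
    have step3 : (2*c + 2*c*(2:ℝ)^p*(2:ℝ)^(p-1)) * (1 + r^(p-1))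
        = 2*c + 2*c*(2:ℝ)^p * ((2:ℝ)^(p-1) * (1 + r^(p-1))) + 2*c*(r^(p-1)) := by ring
    have hcu : (0:ℝ) ≤ 2*c*(r^(p-1)) := by positivity
    rw [hB, hCB, step3]
    linarith
  -- gradient components
  have hgradW : HasFDerivAt W ((InnerProductSpace.toDual ℝ (Mat d)) (gradient W ξ)) ξ :=
    hdiff.hasGradientAt.hasFDerivAt
  have hfd : fderiv ℝ W ξ = (InnerProductSpace.toDual ℝ (Mat d)) (gradient W ξ) :=
    hgradW.fderiv
  have hcomp' : ∀ q : Fin d × Fin d, |gradient W ξ q| ≤ B := by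
    intro q
    have h1 := hcomp q
    rw [hfd] at h1
    have h2 : (InnerProductSpace.toDual ℝ (Mat d)) (gradient W ξ) (EuclideanSpace.single q 1)
        = gradient W ξ q := by
      rw [InnerProductSpace.toDual_apply_apply]
      simpa using EuclideanSpace.inner_single_right q (1:ℝ) (gradient W ξ)
    rwa [h2] at h1
  -- norm bound
  have hnorm : ‖gradient W ξ‖ ≤ d * B := by
    rw [EuclideanSpace.norm_eq]
    have hsum : ∑ q : Fin d × Fin d, ‖gradient W ξ q‖^2 ≤ (d*d) * B^2 := by
      have h1 : ∀ q ∈ Finset.univ, ‖gradient W ξ q‖^2 ≤ B^2 := by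
        intro q _
        have := hcomp' q
        rw [Real.norm_eq_abs]
        exact pow_le_pow_left₀ (abs_nonneg _) this 2
      calc ∑ q : Fin d × Fin d, ‖gradient W ξ q‖^2
          ≤ Finset.univ.card • B^2 := Finset.sum_le_card_nsmul _ _ _ h1
        _ = (d*d) * B^2 := by
            rw [Finset.card_univ, Fintype.card_prod, nsmul_eq_mul]
            push_cast [Fintype.card_fin]
            ring
    calc Real.sqrt (∑ q : Fin d × Fin d, ‖gradient W ξ q‖^2)
        ≤ Real.sqrt ((d*d) * B^2) := Real.sqrt_le_sqrt hsum
      _ = d * B := by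
          rw [show ((d:ℝ)*d)*B^2 = (d*B)^2 by ring]
          exact Real.sqrt_sq (by positivity)
  calc ‖gradient W ξ‖ ≤ d * B := hnorm
    _ = d * CB * (1 + r^(p-1)) := by rw [hB]; ring
    _ ≤ (d * CB + 1) * (1 + r^(p-1)) := by
        apply mul_le_mul_of_nonneg_right (by linarith) (by positivity)


/-- **Growth of the derivative of a quasiconvex function of `p`-growth** (Lemma 2.2 (4) of
Koumatos–Spirito): if `W` is quasiconvex, `C¹`, and `|W(ξ)| ≤ c(1+|ξ|^p)`, then
`|DW(ξ)| ≤ c'(1+|ξ|^{p−1})`. -/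
theorem quasiconvex_derivative_growth
    {d : ℕ} {p : ℝ} (hp : 2 ≤ p) (W : Mat d → ℝ) (c : ℝ) (hc : 0 < c)
    (hW1 : ContDiff ℝ 1 W)
    (hQC : QuasiconvexW W)
    (hW3 : ∀ ξ : Mat d, |W ξ| ≤ c * (1 + ‖ξ‖ ^ p)) :
    ∃ c' > (0:ℝ), ∀ ξ : Mat d, ‖gradient W ξ‖ ≤ c' * (1 + ‖ξ‖ ^ (p - 1)) := by
  exact quasiconvex_derivative_growth' hp W c hc hW1
    (fun ξ q s => qc_midpoint hQC ξ q s) hW3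
end
end

section
/- Let p ≥ 2 and let W : ℝ^{d×d} → ℝ be C² with |DW(ξ)| ≤ c(1+|ξ|^{p-1}) and |W(ξ)−W(η)| ≤ c(1+|ξ|^{p-1}+|η|^{p-1})|ξ−η|. Let F̄ ∈ C⁰(Q̄_T, ℝ^{d×d}) and define G(t,x,ξ) := W(F̄(t,x)+ξ) − W(F̄(t,x)) − DW(F̄(t,x))·ξ. Then for every δ > 0 there exists R = R_δ > 0 such that for all (t,x),(t₀,x₀) ∈ Q̄_T with |x−x₀| < R and |t−t₀| < R, and all ξ ∈ ℝ^{d×d}: |G(t₀,x₀,ξ) − G(t,x,ξ)| ≤ δ|V(ξ)|². -/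
open MeasureTheory Filter Set
open scoped RealInnerProductSpace ENNReal Topology NNReal

noncomputable section

set_option maxHeartbeats 1000000 in
lemma excess_key {d : ℕ} {p : ℝ} (hp : 2 ≤ p)
    (W : Mat d → ℝ) (c : ℝ) (hc : 0 < c)
    (hW1 : ContDiff ℝ 2 W)
    (hWlip : ∀ ξ η : Mat d, |W ξ - W η| ≤ c * (1 + ‖ξ‖ ^ (p - 1) + ‖η‖ ^ (p - 1)) * ‖ξ - η‖)
    (M : ℝ) (hM : 0 ≤ M) :
    ∀ δ > (0:ℝ), ∃ ε > (0:ℝ), ∀ F F₀ : Mat d, ‖F‖ ≤ M → ‖F₀‖ ≤ M → ‖F₀ - F‖ ≤ ε →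
      ∀ ξ : Mat d,
        |(W (F₀ + ξ) - W F₀ - ⟪gradient W F₀, ξ⟫) - (W (F + ξ) - W F - ⟪gradient W F, ξ⟫)|
          ≤ δ * V2 p ξ := by
  intro δ hδ
  have hWdiff : Differentiable ℝ W := hW1.differentiable (by norm_num)
  have hD1c : ContDiff ℝ 1 (fderiv ℝ W) := hW1.fderiv_right (m := 1) (by norm_num)
  have hD1diff : Differentiable ℝ (fderiv ℝ W) := hD1c.differentiable (by norm_num)
  have hD2cont : Continuous (fderiv ℝ (fderiv ℝ W)) :=
    (hD1c.fderiv_right (m := 0) (by norm_num)).continuous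
  -- sup bound for D²W on the ball of radius M+1
  obtain ⟨K2, hK2⟩ := (isCompact_closedBall (0 : Mat d) (M + 1)).exists_bound_of_continuousOn
    (f := fderiv ℝ (fderiv ℝ W)) hD2cont.continuousOn
  set K := max K2 0 with hKdef
  have hK0 : 0 ≤ K := le_max_right _ _
  have hK : ∀ z : Mat d, ‖z‖ ≤ M + 1 → ‖fderiv ℝ (fderiv ℝ W) z‖ ≤ K := fun z hz =>
    le_trans (hK2 z (by simpa [Metric.mem_closedBall, dist_zero_right] using hz)) (le_max_left _ _)
  -- uniform continuity of D²W on the ball of radius M+1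
  have hUC := ((isCompact_closedBall (0 : Mat d) (M + 1)).uniformContinuousOn_of_continuous
    (f := fderiv ℝ (fderiv ℝ W)) hD2cont.continuousOn)
  replace hUC := (Metric.uniformContinuousOn_iff_le (f := fderiv ℝ (fderiv ℝ W))
    (s := Metric.closedBall (0 : Mat d) (M + 1))).mp hUC
  obtain ⟨ε₂, hε₂pos, hε₂⟩ := hUC δ hδ
  set Cb := 2 * c * (1 + 2 * (M + 1) ^ (p - 1)) + K with hCbdef
  have hMp : (0:ℝ) ≤ (M + 1) ^ (p - 1) := Real.rpow_nonneg (by linarith) _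
  have hCb0 : 0 ≤ Cb := by positivity
  refine ⟨min ε₂ (δ / (Cb + 1)), lt_min hε₂pos (by positivity), ?_⟩
  intro F F₀ hF hF₀ hFF ξ
  have hn0 : (0:ℝ) ≤ ‖F₀ - F‖ := norm_nonneg _
  have hεle : ‖F₀ - F‖ ≤ ε₂ := hFF.trans (min_le_left _ _)
  have hεle2 : ‖F₀ - F‖ ≤ δ / (Cb + 1) := hFF.trans (min_le_right _ _)
  have hgrad : ∀ (G z : Mat d), ⟪gradient W G, z⟫ = fderiv ℝ W G z := fun G z => by
    simp [gradient, InnerProductSpace.toDual_symm_apply]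
  have hWtrans : ∀ (G ζ : Mat d),
      HasFDerivAt (fun z : Mat d => W (G + z)) (fderiv ℝ W (G + ζ)) ζ := by
    intro G ζ
    have h1 : HasFDerivAt W (fderiv ℝ W (G + ζ)) (G + ζ) := (hWdiff (G + ζ)).hasFDerivAt
    have h2 : HasFDerivAt (fun z : Mat d => G + z) (ContinuousLinearMap.id ℝ (Mat d)) ζ :=
      (hasFDerivAt_id ζ).const_add G
    exact h1.comp ζ h2
  have hD1trans : ∀ (G ζ : Mat d),
      HasFDerivAt (fun z : Mat d => fderiv ℝ W (G + z)) (fderiv ℝ (fderiv ℝ W) (G + ζ)) ζ := by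
    intro G ζ
    have h1 : HasFDerivAt (fderiv ℝ W) (fderiv ℝ (fderiv ℝ W) (G + ζ)) (G + ζ) :=
      (hD1diff (G + ζ)).hasFDerivAt
    have h2 : HasFDerivAt (fun z : Mat d => G + z) (ContinuousLinearMap.id ℝ (Mat d)) ζ :=
      (hasFDerivAt_id ζ).const_add G
    exact h1.comp ζ h2
  have hV2 : (0:ℝ) ≤ V2 p ξ := by
    have := Real.rpow_nonneg (norm_nonneg ξ) p
    unfold V2; positivity
  rcases le_or_gt ‖ξ‖ 1 with hξ | hξ
  · -- small ξ: second-order argument via two mean-value steps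
    set u : Mat d → (Mat d →L[ℝ] ℝ) :=
      fun ζ => fderiv ℝ W (F₀ + ζ) - fderiv ℝ W (F + ζ) with hudef
    set h : Mat d → ℝ :=
      fun ζ => W (F₀ + ζ) - W (F + ζ) - (fderiv ℝ W F₀ - fderiv ℝ W F) ζ with hhdef
    -- step 1
    have hstep1 : ∀ ζ ∈ Metric.closedBall (0 : Mat d) 1, ‖u ζ - u 0‖ ≤ δ * ‖ζ‖ := by
      intro ζ hζ
      have := Convex.norm_image_sub_le_of_norm_hasFDerivWithin_le
        (f := u)
        (f' := fun ζ => fderiv ℝ (fderiv ℝ W) (F₀ + ζ) - fderiv ℝ (fderiv ℝ W) (F + ζ))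
        (s := Metric.closedBall (0 : Mat d) 1) (C := δ)
        (fun z _ => ((hD1trans F₀ z).sub (hD1trans F z)).hasFDerivWithinAt)
        (fun z hz => ?_) (convex_closedBall _ _) (Metric.mem_closedBall_self zero_le_one) hζ
      · simpa using this
      · have hz1 : ‖z‖ ≤ 1 := by simpa [Metric.mem_closedBall, dist_zero_right] using hz
        have ha : F₀ + z ∈ Metric.closedBall (0 : Mat d) (M + 1) := by
          simp only [Metric.mem_closedBall, dist_zero_right]
          calc ‖F₀ + z‖ ≤ ‖F₀‖ + ‖z‖ := norm_add_le _ _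
            _ ≤ M + 1 := by linarith
        have hb : F + z ∈ Metric.closedBall (0 : Mat d) (M + 1) := by
          simp only [Metric.mem_closedBall, dist_zero_right]
          calc ‖F + z‖ ≤ ‖F‖ + ‖z‖ := norm_add_le _ _
            _ ≤ M + 1 := by linarith
        have hd : dist (F₀ + z) (F + z) ≤ ε₂ := by
          rw [dist_eq_norm]; simpa using hεle
        have := hε₂ _ ha _ hb hd
        exact (dist_eq_norm _ _).symm.trans_le this
    -- step 2
    have hstep2 : ‖h ξ - h 0‖ ≤ δ * ‖ξ‖ * ‖ξ‖ := by
      have := Convex.norm_image_sub_le_of_norm_hasFDerivWithin_le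
        (f := h) (f' := fun ζ => u ζ - u 0)
        (s := Metric.closedBall (0 : Mat d) ‖ξ‖) (C := δ * ‖ξ‖)
        (fun z _ => ?_) (fun z hz => ?_) (convex_closedBall _ _)
        (Metric.mem_closedBall_self (norm_nonneg ξ))
        (show ξ ∈ Metric.closedBall (0 : Mat d) ‖ξ‖ from Metric.mem_closedBall.mpr (by simp))
      · simpa using this
      · have hder : HasFDerivAt h
            ((fderiv ℝ W (F₀ + z) - fderiv ℝ W (F + z)) - (fderiv ℝ W F₀ - fderiv ℝ W F)) z :=
          ((hWtrans F₀ z).sub (hWtrans F z)).sub ((fderiv ℝ W F₀ - fderiv ℝ W F).hasFDerivAt)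
        have hu0 : u z - u 0 = (fderiv ℝ W (F₀ + z) - fderiv ℝ W (F + z))
            - (fderiv ℝ W F₀ - fderiv ℝ W F) := by
          simp only [hudef, add_zero]
        show HasFDerivWithinAt h (u z - u 0) _ z
        rw [hu0]
        exact hder.hasFDerivWithinAt
      · have hz1 : ‖z‖ ≤ ‖ξ‖ := by simpa [Metric.mem_closedBall, dist_zero_right] using hz
        have h1 := hstep1 z (by
          simp only [Metric.mem_closedBall, dist_zero_right]; exact hz1.trans hξ)
        show ‖u z - u 0‖ ≤ δ * ‖ξ‖
        calc ‖u z - u 0‖ ≤ δ * ‖z‖ := h1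
          _ ≤ δ * ‖ξ‖ := by nlinarith
    have hEq : (W (F₀ + ξ) - W F₀ - ⟪gradient W F₀, ξ⟫)
        - (W (F + ξ) - W F - ⟪gradient W F, ξ⟫) = h ξ - h 0 := by
      rw [hgrad, hgrad]
      simp only [hhdef, add_zero, map_zero, ContinuousLinearMap.sub_apply]
      ring
    rw [hEq, ← Real.norm_eq_abs]
    calc ‖h ξ - h 0‖ ≤ δ * ‖ξ‖ * ‖ξ‖ := hstep2
      _ ≤ δ * V2 p ξ := by
        have hp0 : (0:ℝ) ≤ ‖ξ‖ ^ p := Real.rpow_nonneg (norm_nonneg ξ) p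
        unfold V2; nlinarith [norm_nonneg ξ]
  · -- large ξ
    have hξ1 : (1:ℝ) ≤ ‖ξ‖ := hξ.le
    have hP1 : (1:ℝ) ≤ ‖ξ‖ ^ p := by
      calc (1:ℝ) = 1 ^ p := (Real.one_rpow p).symm
        _ ≤ ‖ξ‖ ^ p := Real.rpow_le_rpow zero_le_one hξ1 (by linarith)
    have hP0 : (0:ℝ) ≤ ‖ξ‖ ^ p := le_trans zero_le_one hP1
    have hbound1 : ∀ G : Mat d, ‖G‖ ≤ M → ‖G + ξ‖ ^ (p - 1) ≤ (M + 1) ^ (p - 1) * ‖ξ‖ ^ p := by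
      intro G hG
      have h1 : ‖G + ξ‖ ≤ (M + 1) * ‖ξ‖ := by
        calc ‖G + ξ‖ ≤ ‖G‖ + ‖ξ‖ := norm_add_le _ _
          _ ≤ (M + 1) * ‖ξ‖ := by nlinarith
      calc ‖G + ξ‖ ^ (p - 1) ≤ ((M + 1) * ‖ξ‖) ^ (p - 1) :=
            Real.rpow_le_rpow (norm_nonneg _) h1 (by linarith)
        _ = (M + 1) ^ (p - 1) * ‖ξ‖ ^ (p - 1) :=
            Real.mul_rpow (by linarith) (norm_nonneg _)
        _ ≤ (M + 1) ^ (p - 1) * ‖ξ‖ ^ p := by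
            have := Real.rpow_le_rpow_of_exponent_le hξ1 (by linarith : p - 1 ≤ p)
            nlinarith
    have hbound2 : ∀ G : Mat d, ‖G‖ ≤ M → ‖G‖ ^ (p - 1) ≤ (M + 1) ^ (p - 1) * ‖ξ‖ ^ p := by
      intro G hG
      calc ‖G‖ ^ (p - 1) ≤ (M + 1) ^ (p - 1) :=
            Real.rpow_le_rpow (norm_nonneg _) (by linarith) (by linarith)
        _ ≤ (M + 1) ^ (p - 1) * ‖ξ‖ ^ p := by nlinarith
    -- term A
    have hA : |W (F₀ + ξ) - W (F + ξ)|
        ≤ c * ((1 + 2 * (M + 1) ^ (p - 1)) * ‖ξ‖ ^ p) * ‖F₀ - F‖ := by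
      have := hWlip (F₀ + ξ) (F + ξ)
      rw [add_sub_add_right_eq_sub] at this
      refine this.trans ?_
      have h1 := hbound1 F₀ hF₀
      have h2 := hbound1 F hF
      have hs : 1 + ‖F₀ + ξ‖ ^ (p - 1) + ‖F + ξ‖ ^ (p - 1)
          ≤ (1 + 2 * (M + 1) ^ (p - 1)) * ‖ξ‖ ^ p := by nlinarith
      exact mul_le_mul_of_nonneg_right (mul_le_mul_of_nonneg_left hs hc.le) hn0
    -- term B
    have hB : |W F₀ - W F| ≤ c * ((1 + 2 * (M + 1) ^ (p - 1)) * ‖ξ‖ ^ p) * ‖F₀ - F‖ := by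
      refine (hWlip F₀ F).trans ?_
      have h1 := hbound2 F₀ hF₀
      have h2 := hbound2 F hF
      have hs : 1 + ‖F₀‖ ^ (p - 1) + ‖F‖ ^ (p - 1)
          ≤ (1 + 2 * (M + 1) ^ (p - 1)) * ‖ξ‖ ^ p := by nlinarith
      exact mul_le_mul_of_nonneg_right (mul_le_mul_of_nonneg_left hs hc.le) hn0
    -- term C
    have hgradsub : ‖gradient W F₀ - gradient W F‖ ≤ K * ‖F₀ - F‖ := by
      have heq : ‖gradient W F₀ - gradient W F‖ = ‖fderiv ℝ W F₀ - fderiv ℝ W F‖ := by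
        rw [gradient, gradient, ← map_sub]
        exact LinearIsometryEquiv.norm_map _ _
      rw [heq]
      have := Convex.norm_image_sub_le_of_norm_hasFDerivWithin_le
        (f := fderiv ℝ W) (f' := fderiv ℝ (fderiv ℝ W))
        (s := Metric.closedBall (0 : Mat d) M) (C := K)
        (fun z _ => (hD1diff z).hasFDerivAt.hasFDerivWithinAt)
        (fun z hz => hK z (by
          have : ‖z‖ ≤ M := by simpa [Metric.mem_closedBall, dist_zero_right] using hz
          linarith))
        (convex_closedBall _ _)
        (by simpa [Metric.mem_closedBall, dist_zero_right] using hF)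
        (by simpa [Metric.mem_closedBall, dist_zero_right] using hF₀)
      exact this
    have hC : |⟪gradient W F₀, ξ⟫ - ⟪gradient W F, ξ⟫| ≤ K * ‖F₀ - F‖ * ‖ξ‖ ^ 2 := by
      rw [← inner_sub_left]
      calc |⟪gradient W F₀ - gradient W F, ξ⟫|
          ≤ ‖gradient W F₀ - gradient W F‖ * ‖ξ‖ := abs_real_inner_le_norm _ _
        _ ≤ (K * ‖F₀ - F‖) * ‖ξ‖ := mul_le_mul_of_nonneg_right hgradsub (norm_nonneg ξ)
        _ ≤ K * ‖F₀ - F‖ * ‖ξ‖ ^ 2 := by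
            have hxx : ‖ξ‖ ≤ ‖ξ‖ ^ 2 := by nlinarith
            have hKn : (0:ℝ) ≤ K * ‖F₀ - F‖ := mul_nonneg hK0 hn0
            nlinarith
    -- assemble
    have hsplit : |(W (F₀ + ξ) - W F₀ - ⟪gradient W F₀, ξ⟫)
        - (W (F + ξ) - W F - ⟪gradient W F, ξ⟫)|
        ≤ |W (F₀ + ξ) - W (F + ξ)| + |W F₀ - W F|
          + |⟪gradient W F₀, ξ⟫ - ⟪gradient W F, ξ⟫| := by
      have : (W (F₀ + ξ) - W F₀ - ⟪gradient W F₀, ξ⟫)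
          - (W (F + ξ) - W F - ⟪gradient W F, ξ⟫)
          = (W (F₀ + ξ) - W (F + ξ)) + (-(W F₀ - W F))
            + (-(⟪gradient W F₀, ξ⟫ - ⟪gradient W F, ξ⟫)) := by ring
      rw [this]
      refine (abs_add_three _ _ _).trans ?_
      simp only [abs_neg]
      exact le_refl _
    have hfin : Cb * ‖F₀ - F‖ * V2 p ξ ≤ δ * V2 p ξ := by
      have h1 : Cb * ‖F₀ - F‖ ≤ δ := by
        have h2 : Cb * ‖F₀ - F‖ ≤ Cb * (δ / (Cb + 1)) :=
          mul_le_mul_of_nonneg_left hεle2 hCb0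
        refine h2.trans ?_
        have hlt : (0:ℝ) < Cb + 1 := by linarith
        rw [mul_div_assoc', div_le_iff₀ hlt]
        nlinarith
      exact mul_le_mul_of_nonneg_right h1 hV2
    refine hsplit.trans (le_trans ?_ hfin)
    have hcf : (0:ℝ) ≤ 2 * c * (1 + 2 * (M + 1) ^ (p - 1)) := by nlinarith
    have h5 : (0:ℝ) ≤ 2 * c * (1 + 2 * (M + 1) ^ (p - 1)) * (‖F₀ - F‖ * ‖ξ‖ ^ 2) :=
      mul_nonneg hcf (mul_nonneg hn0 (sq_nonneg _))
    have h6 : (0:ℝ) ≤ K * (‖F₀ - F‖ * ‖ξ‖ ^ p) := mul_nonneg hK0 (mul_nonneg hn0 hP0)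
    rw [hCbdef]
    unfold V2
    nlinarith [hA, hB, hC]


lemma qcube_bounded (d : ℕ) : Bornology.IsBounded (Qcube d) := by
  rw [Metric.isBounded_iff_subset_closedBall 0]
  refine ⟨Real.sqrt d, fun x hx => ?_⟩
  rw [Metric.mem_closedBall, dist_zero_right, EuclideanSpace.norm_eq]
  refine Real.sqrt_le_sqrt ?_
  have h1 : ∀ i, ‖x i‖ ^ 2 ≤ 1 := by
    intro i
    have h := hx i
    simp only [Real.norm_eq_abs, sq_abs]
    nlinarith [h.1, h.2]
  calc ∑ i, ‖x i‖ ^ 2 ≤ ∑ _i : Fin d, (1:ℝ) := Finset.sum_le_sum (fun i _ => h1 i)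
    _ = (d : ℝ) := by simp

lemma qcube_closure_compact (d : ℕ) : IsCompact (closure (Qcube d)) :=
  Metric.isCompact_of_isClosed_isBounded isClosed_closure (qcube_bounded d).closure


/-- **Uniform continuity of the Weierstrass excess `G` in `(t,x)`** (Lemma 5.4 (b) of
Koumatos–Spirito). With `G(t,x,ξ) = W(F̄(t,x)+ξ) − W(F̄(t,x)) − DW(F̄(t,x))·ξ` and
`F̄ ∈ C⁰(Q̄_T)`, for every `δ > 0` there is `R > 0` such that
`|G(t₀,x₀,ξ) − G(t,x,ξ)| ≤ δ |V(ξ)|²` whenever `|x−x₀| < R` and `|t−t₀| < R`. -/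
theorem excess_G_uniform_continuity
    {d : ℕ} {p : ℝ} (hp : 2 ≤ p) {T : ℝ} (hT : 0 < T)
    (W : Mat d → ℝ) (c : ℝ) (hc : 0 < c)
    (hW1 : ContDiff ℝ 2 W)
    (hDW : ∀ ξ : Mat d, ‖gradient W ξ‖ ≤ c * (1 + ‖ξ‖ ^ (p - 1)))
    (hWlip : ∀ ξ η : Mat d, |W ξ - W η| ≤ c * (1 + ‖ξ‖ ^ (p - 1) + ‖η‖ ^ (p - 1)) * ‖ξ - η‖)
    (Fb : ℝ → Vec d → Mat d)
    (hFb_cont : ContinuousOn (fun z : ℝ × Vec d => Fb z.1 z.2)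
      (Icc 0 T ×ˢ closure (Qcube d))) :
    ∀ δ > (0:ℝ), ∃ R > (0:ℝ),
      ∀ t ∈ Icc (0:ℝ) T, ∀ t₀ ∈ Icc (0:ℝ) T,
      ∀ x ∈ closure (Qcube d), ∀ x₀ ∈ closure (Qcube d),
      ‖x - x₀‖ < R → |t - t₀| < R → ∀ ξ : Mat d,
        |(W (Fb t₀ x₀ + ξ) - W (Fb t₀ x₀) - ⟪gradient W (Fb t₀ x₀), ξ⟫)
          - (W (Fb t x + ξ) - W (Fb t x) - ⟪gradient W (Fb t x), ξ⟫)| ≤ δ * V2 p ξ := by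
  intro δ hδ
  set Kset : Set (ℝ × Vec d) := Icc (0:ℝ) T ×ˢ closure (Qcube d) with hKset
  have hKc : IsCompact Kset := isCompact_Icc.prod (qcube_closure_compact d)
  obtain ⟨M0, hM0⟩ := hKc.exists_bound_of_continuousOn hFb_cont
  set M := max M0 0 with hMdef
  obtain ⟨ε, hε, hkey⟩ := excess_key hp W c hc hW1 hWlip M (le_max_right _ _) δ hδ
  have hUC := hKc.uniformContinuousOn_of_continuous hFb_cont
  rw [Metric.uniformContinuousOn_iff] at hUC
  obtain ⟨R, hR, hRprop⟩ := hUC ε hε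
  refine ⟨R, hR, ?_⟩
  intro t ht t₀ ht₀ x hx x₀ hx₀ hxx htt ξ
  have hz : (t, x) ∈ Kset := ⟨ht, hx⟩
  have hz₀ : (t₀, x₀) ∈ Kset := ⟨ht₀, hx₀⟩
  have hdist : dist ((t, x) : ℝ × Vec d) (t₀, x₀) < R := by
    rw [Prod.dist_eq]
    exact max_lt (by rwa [Real.dist_eq]) (by rwa [dist_eq_norm])
  have hd := hRprop (t, x) hz (t₀, x₀) hz₀ hdist
  have hFdiff : ‖Fb t₀ x₀ - Fb t x‖ ≤ ε := by
    rw [dist_eq_norm, norm_sub_rev] at hd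
    exact hd.le
  exact hkey (Fb t x) (Fb t₀ x₀) ((hM0 (t, x) hz).trans (le_max_left _ _))
    ((hM0 (t₀, x₀) hz₀).trans (le_max_left _ _)) hFdiff ξ
end
end
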